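/- The only signed permutations of ℝⁿ preserving the spans of all admissible root systems of type Cₙ are plus and minus the identity. -/
import Mathlib


/-- `L(k,l)` is the span of the admissible root system
`F(k,l) = {2e₁,…,2e_k, e_{k+1}−e_{k+2}, …, e_{k+2l−1}−e_{k+2l}}` of type `Cₙ`,
i.e. the span of `e₁, …, e_k` and `e_{k+2j−1} − e_{k+2j}` for `1 ≤ j ≤ l`
(zero-based: `e_i` for `i < k` and `e_{k+2j} − e_{k+2j+1}` for `j < l`). -/
def admissibleSpanC (n k l : ℕ) (h : k + 2 * l ≤ n) : Submodule ℝ (Fin n → ℝ) :=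
  Submodule.span ℝ
    ({x | ∃ (i : ℕ) (hi : i < k), x = Pi.single (⟨i, by omega⟩ : Fin n) (1 : ℝ)} ∪
     {x | ∃ (j : ℕ) (hj : j < l),
        x = Pi.single (⟨k + 2 * j, by omega⟩ : Fin n) (1 : ℝ)
              - Pi.single (⟨k + 2 * j + 1, by omega⟩ : Fin n) (1 : ℝ)})

lemma span_zero_coord {n k l : ℕ} (h : k + 2 * l ≤ n) (m : Fin n) (hm : k + 2 * l ≤ m.val)
    {x : Fin n → ℝ} (hx : x ∈ admissibleSpanC n k l h) : x m = 0 := by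
  have hle : admissibleSpanC n k l h ≤
      LinearMap.ker (LinearMap.proj (R := ℝ) (φ := fun _ : Fin n => ℝ) m) := by
    rw [admissibleSpanC, Submodule.span_le]
    rintro y (⟨i, hi, rfl⟩ | ⟨j, hj, rfl⟩) <;>
      simp [LinearMap.mem_ker, Pi.single_apply, Fin.ext_iff] <;>
      first | omega | (split_ifs with h1 h2 <;> first | omega | norm_num)
  simpa using hle hx

lemma span_sum_coord {n k : ℕ} (h : k + 2 * 1 ≤ n)
    {x : Fin n → ℝ} (hx : x ∈ admissibleSpanC n k 1 h) :
    x ⟨k, by omega⟩ + x ⟨k + 1, by omega⟩ = 0 := by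
  have hle : admissibleSpanC n k 1 h ≤
      LinearMap.ker (LinearMap.proj (R := ℝ) (φ := fun _ : Fin n => ℝ) ⟨k, by omega⟩
        + LinearMap.proj (R := ℝ) (φ := fun _ : Fin n => ℝ) ⟨k + 1, by omega⟩) := by
    rw [admissibleSpanC, Submodule.span_le]
    rintro y (⟨i, hi, rfl⟩ | ⟨j, hj, rfl⟩) <;>
      simp [LinearMap.mem_ker, Pi.single_apply, Fin.ext_iff] <;>
      first | omega | (split_ifs <;> first | omega | norm_num)
  simpa using hle hx

/-- The only signed permutations of `ℝⁿ` preserving the spans of all admissible root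
systems of type `Cₙ` are plus and minus the identity. -/
theorem signedPerm_preserving_admissibleSpansC_eq_pm_id
    (n : ℕ) (hn : 2 ≤ n)
    (w : (Fin n → ℝ) →ₗ[ℝ] (Fin n → ℝ))
    (σ : Equiv.Perm (Fin n)) (ε : Fin n → ℝ)
    (hε : ∀ i, ε i = 1 ∨ ε i = -1)
    (hw : ∀ i : Fin n, w (Pi.single i (1 : ℝ)) = ε i • (Pi.single (σ i) (1 : ℝ) : Fin n → ℝ))
    (hstab : ∀ (k l : ℕ) (h : k + 2 * l ≤ n),
      Submodule.map w (admissibleSpanC n k l h) = admissibleSpanC n k l h) :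
    w = LinearMap.id ∨ w = -LinearMap.id := by
  have hεne : ∀ i, ε i ≠ 0 := by
    intro i; rcases hε i with h | h <;> rw [h] <;> norm_num
  -- σ i ≤ i
  have hσle : ∀ i : Fin n, (σ i).val ≤ i.val := by
    intro i
    by_contra hlt
    push_neg at hlt
    have h1 : i.val + 1 + 2 * 0 ≤ n := by omega
    have hmem : Pi.single i (1 : ℝ) ∈ admissibleSpanC n (i.val + 1) 0 h1 := by
      apply Submodule.subset_span
      exact Or.inl ⟨i.val, by omega, by simp⟩
    have hw' : w (Pi.single i 1) ∈ admissibleSpanC n (i.val + 1) 0 h1 := by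
      rw [← hstab (i.val + 1) 0 h1]; exact Submodule.mem_map_of_mem hmem
    rw [hw i] at hw'
    have hz := span_zero_coord h1 (σ i) (by omega) hw'
    simp at hz
    exact hεne i hz
  -- σ = id
  have hσ : ∀ i : Fin n, σ i = i := by
    have key : ∀ m : ℕ, ∀ i : Fin n, i.val = m → σ i = i := by
      intro m
      induction m using Nat.strong_induction_on with
      | _ m ih =>
        intro i him
        rcases lt_or_eq_of_le (hσle i) with hlt | heq
        · exfalso
          have hj : σ (σ i) = σ i := ih (σ i).val (by omega) (σ i) rfl
          have : σ i = i := σ.injective hj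
          omega
        · exact Fin.ext heq
    exact fun i => key i.val i rfl
  -- ε is constant
  have hεstep : ∀ k : ℕ, (h2 : k + 1 < n) →
      ε ⟨k, by omega⟩ = ε ⟨k + 1, by omega⟩ := by
    intro k h2
    have h1 : k + 2 * 1 ≤ n := by omega
    set a : Fin n := ⟨k, by omega⟩
    set b : Fin n := ⟨k + 1, by omega⟩
    have hmem : Pi.single a (1 : ℝ) - Pi.single b 1 ∈ admissibleSpanC n k 1 h1 := by
      apply Submodule.subset_span
      refine Or.inr ⟨0, Nat.zero_lt_one, ?_⟩
      congr 1
    have hw' : w (Pi.single a 1 - Pi.single b 1) ∈ admissibleSpanC n k 1 h1 := by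
      rw [← hstab k 1 h1]; exact Submodule.mem_map_of_mem hmem
    rw [map_sub, hw a, hw b, hσ a, hσ b] at hw'
    have hz := span_sum_coord h1 hw'
    have hab : a ≠ b := by simp [a, b, Fin.ext_iff]
    simp [Pi.single_apply, hab, hab.symm, a, b, Fin.ext_iff] at hz
    linarith
  have hεconst : ∀ i : Fin n, ε i = ε ⟨0, by omega⟩ := by
    have key : ∀ m : ℕ, (hm : m < n) → ε ⟨m, hm⟩ = ε ⟨0, by omega⟩ := by
      intro m
      induction m with
      | zero => intro _; rfl
      | succ p ih =>
        intro hm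
        have := hεstep p (by omega)
        rw [← this]; exact ih (by omega)
    intro i
    have := key i.val i.isLt
    simpa using this
  -- conclude
  have hwi : ∀ i : Fin n, w (Pi.single i 1) = ε ⟨0, by omega⟩ • (Pi.single i (1:ℝ) : Fin n → ℝ) := by
    intro i
    rw [hw i, hσ i, hεconst i]
  rcases hε ⟨0, by omega⟩ with h0 | h0
  · left
    apply (Pi.basisFun ℝ (Fin n)).ext
    intro i
    simp [Pi.basisFun_apply, hwi i, h0]
  · right
    apply (Pi.basisFun ℝ (Fin n)).ext
    intro i
    simp [Pi.basisFun_apply, hwi i, h0]
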